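/- Let B⟨X⟩ be the free product of a unital ℂ-algebra B with ℂ⟨X⟩. The sequence 0 → B + [B⟨X⟩, B⟨X⟩] → B⟨X⟩ →^{δ_{X:B}} B⟨X⟩ →^{Θ} B⟨X⟩ is exact: the kernel of δ_{X:B} equals B + [B⟨X⟩, B⟨X⟩], and the image of δ_{X:B} equals the kernel of Θ. -/

import Mathlib

open scoped TensorProduct

noncomputable section

/-- `(A, ι, X)` is the free product `B *_ℂ ℂ⟨X⟩`, characterized by its universal
property: every algebra map `φ : B → C` together with a choice of element `x ∈ C`
extends uniquely to an algebra map `A → C` sending `X` to `x`. -/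
def IsFreeProduct {B A : Type} [Ring B] [Algebra ℂ B] [Ring A] [Algebra ℂ A]
    (ι : B →ₐ[ℂ] A) (X : A) : Prop :=
  ∀ (C : Type) [Ring C] [Algebra ℂ C], ∀ (φ : B →ₐ[ℂ] C) (x : C),
    ∃! ψ : A →ₐ[ℂ] C, ψ.comp ι = φ ∧ ψ X = x

/-- the monomial `b₀ X b₁ ⋯ X bₙ`, where `bs = [b₁, …, bₙ]`. -/
def mono {B A : Type} [Ring B] [Algebra ℂ B] [Ring A] [Algebra ℂ A]
    (ι : B →ₐ[ℂ] A) (X : A) (b0 : B) (bs : List B) : A :=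
  ι b0 * (bs.map (fun b => X * ι b)).prod

/-- the cyclic derivative `δ = μ ∘ σ ∘ ∂` associated with a difference quotient `D`. -/
def cyclicDer {A : Type} [Ring A] [Algebra ℂ A] (D : A →ₗ[ℂ] A ⊗[ℂ] A) : A →ₗ[ℂ] A :=
  (LinearMap.mul' ℂ A) ∘ₗ (TensorProduct.comm ℂ A A).toLinearMap ∘ₗ D

/-- the operation `u # b`, determined by `(a ⊗ c) # b = a b c`. -/
def sharp {A : Type} [Ring A] [Algebra ℂ A] (u : A ⊗[ℂ] A) (b : A) : A :=
  LinearMap.mul' ℂ A (u * (b ⊗ₜ[ℂ] (1 : A)))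

/-- the divergence operator `∂* : u ↦ u # X`, i.e. `(a ⊗ c) ↦ a X c`. -/
def divg {A : Type} [Ring A] [Algebra ℂ A] (X : A) : A ⊗[ℂ] A →ₗ[ℂ] A :=
  (LinearMap.mul' ℂ A) ∘ₗ (LinearMap.mulRight ℂ (X ⊗ₜ[ℂ] (1 : A)))

/-- the number operator `N = ∂* ∘ ∂`. -/
def numOp {A : Type} [Ring A] [Algebra ℂ A] (X : A) (D : A →ₗ[ℂ] A ⊗[ℂ] A) :
    A →ₗ[ℂ] A :=
  divg X ∘ₗ D

/-!
The free product is spanned by the monomials `b₀ X b₁ ⋯ X bₙ` and graded by their number `n`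
of `X`s, through the algebra map `A → A[T]`, `X ↦ X T`; the projections onto the graded pieces
commute with `ρ` and preserve the span of commutators.

The number operator `N = ∂* ∘ ∂` is `n` in degree `n`, and `N a - X δ a` is a sum of
commutators. So if `δ a = 0`, every component of `a` of positive degree is a sum of commutators,
while the component of degree `0` lies in `B`.

For a monomial `w` of degree `n`, `δ (X w) = ∑_{i ≤ n} ρⁱ w` is the sum of the cyclic
rotations of `w`; by linearity, a `ρ`-fixed `v` of degree `n` is therefore `δ (X v) / (n + 1)`. Conversely, by
`δ (p q) = δ (q p)` the image under `δ` of any monomial is such a rotation sum, which is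
`ρ`-invariant.
-/

namespace CyclicDer

variable {B A : Type} [Ring B] [Algebra ℂ B] [Ring A] [Algebra ℂ A]
  (ι : B →ₐ[ℂ] A) (X : A)

def word (l : List B) : A := (l.map fun b => X * ι b).prod

def monoOfList : List B → A
  | [] => 1
  | b :: l => mono ι X b l

theorem mono_eq_mul_word (b : B) (l : List B) : mono ι X b l = ι b * word ι X l := rfl

@[simp] theorem word_nil : word ι X [] = 1 := rfl

theorem word_cons (c : B) (l : List B) : word ι X (c :: l) = X * ι c * word ι X l := by
  simp [word, mul_assoc]

theorem mono_cons (b c : B) (l : List B) : mono ι X b (c :: l) = ι b * (X * mono ι X c l) := by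
  simp [mono_eq_mul_word, word_cons, mul_assoc]

theorem word_append (l₁ l₂ : List B) :
    word ι X (l₁ ++ l₂) = word ι X l₁ * word ι X l₂ := by
  simp [word]

theorem word_concat_mul (l : List B) (c b : B) :
    word ι X (l ++ [c]) * ι b = word ι X (l ++ [c * b]) := by
  simp [word, mul_assoc]

theorem mono_mul_mono (b c : B) (l₁ l₂ : List B) :
    ∃ b' l, mono ι X b l₁ * mono ι X c l₂ = mono ι X b' l := by
  rcases l₁.eq_nil_or_concat with rfl | ⟨l, d, rfl⟩
  · exact ⟨b * c, l₂, by simp [mono_eq_mul_word, mul_assoc]⟩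
  · refine ⟨b, l ++ [d * c] ++ l₂, ?_⟩
    simp only [List.concat_eq_append, mono_eq_mul_word]
    rw [word_append _ _ (l ++ _), ← word_concat_mul]
    simp only [mul_assoc]

theorem monoOfList_append {l₁ : List B} (h : l₁ ≠ []) (l₂ : List B) :
    monoOfList ι X (l₁ ++ l₂) = monoOfList ι X l₁ * word ι X l₂ := by
  obtain ⟨b, l, rfl⟩ := List.exists_cons_of_ne_nil h
  simp [monoOfList, mono_eq_mul_word, word_append, mul_assoc]

variable (A) in
def commutatorSpan : Submodule ℂ A := Submodule.span ℂ {x | ∃ p q : A, x = p * q - q * p}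

def monomials : Submonoid A where
  carrier := Set.range fun bl : B × List B => mono ι X bl.1 bl.2
  one_mem' := ⟨(1, []), by simp [mono_eq_mul_word]⟩
  mul_mem' := by
    rintro _ _ ⟨⟨b, l₁⟩, rfl⟩ ⟨⟨c, l₂⟩, rfl⟩
    obtain ⟨b', l, h⟩ := mono_mul_mono ι X b c l₁ l₂
    exact ⟨(b', l), h.symm⟩

end CyclicDer

namespace IsFreeProduct

open CyclicDer

variable {B A : Type} [Ring B] [Algebra ℂ B] [Ring A] [Algebra ℂ A]
  {ι : B →ₐ[ℂ] A} {X : A}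

theorem algHom_ext (hfree : IsFreeProduct ι X) {C : Type} [Ring C] [Algebra ℂ C]
    {ψ₁ ψ₂ : A →ₐ[ℂ] C} (hι : ψ₁.comp ι = ψ₂.comp ι) (hX : ψ₁ X = ψ₂ X) :
    ψ₁ = ψ₂ :=
  (hfree C (ψ₂.comp ι) (ψ₂ X)).unique ⟨hι, hX⟩ ⟨rfl, rfl⟩

theorem adjoin_eq_top (hfree : IsFreeProduct ι X) :
    Algebra.adjoin ℂ (insert X (Set.range ι)) = ⊤ := by
  set S := Algebra.adjoin ℂ (insert X (Set.range ι))
  have hX : X ∈ S := Algebra.subset_adjoin (Set.mem_insert _ _)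
  have hι : ∀ b, ι b ∈ S := fun b =>
    Algebra.subset_adjoin (Set.mem_insert_of_mem _ ⟨b, rfl⟩)
  obtain ⟨ψ, ⟨hψι, hψX⟩, -⟩ := hfree S (ι.codRestrict S hι) ⟨X, hX⟩
  have hsection : S.val.comp ψ = AlgHom.id ℂ A := hfree.algHom_ext
    (by rw [AlgHom.comp_assoc, hψι]; rfl) (by simp [hψX])
  refine eq_top_iff.2 fun a _ => ?_
  have ha : S.val (ψ a) = a := by rw [← AlgHom.comp_apply, hsection, AlgHom.id_apply]
  exact ha ▸ (ψ a).2

theorem span_monomials (hfree : IsFreeProduct ι X) :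
    Submodule.span ℂ (monomials ι X : Set A) = ⊤ := by
  have hgen : insert X (Set.range ι) ⊆ monomials ι X := by
    refine Set.insert_subset ⟨(1, [1]), by simp [mono_eq_mul_word, word]⟩ ?_
    rintro _ ⟨b, rfl⟩
    exact ⟨(b, []), by simp [mono_eq_mul_word]⟩
  refine Submodule.eq_top_iff'.2 fun a => Submodule.span_mono (Submonoid.closure_le.2 hgen) ?_
  rw [← Algebra.adjoin_eq_span, hfree.adjoin_eq_top]
  trivial

theorem linearMap_ext (hfree : IsFreeProduct ι X) {M : Type} [AddCommGroup M] [Module ℂ M]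
    {f g : A →ₗ[ℂ] M} (h : ∀ b l, f (mono ι X b l) = g (mono ι X b l)) : f = g :=
  LinearMap.ext_on hfree.span_monomials (by rintro _ ⟨⟨b, l⟩, rfl⟩; exact h b l)

section Grading

open Polynomial Finset

variable (hfree : IsFreeProduct ι X)

/-- The power of the polynomial variable counts the `X`s of a monomial. -/
def grading : A →ₐ[ℂ] Polynomial A :=
  (hfree (Polynomial A) (CAlgHom.comp ι) (C X * Polynomial.X)).exists.choose

theorem grading_ι (b : B) : hfree.grading (ι b) = C (ι b) :=
  AlgHom.congr_fun
    (hfree (Polynomial A) (CAlgHom.comp ι) (C X * Polynomial.X)).exists.choose_spec.1 b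

theorem grading_X : hfree.grading X = C X * Polynomial.X :=
  (hfree (Polynomial A) (CAlgHom.comp ι) (C X * Polynomial.X)).exists.choose_spec.2

theorem grading_word (l : List B) :
    hfree.grading (word ι X l) = monomial l.length (word ι X l) := by
  induction l with
  | nil => simp
  | cons c l ih =>
    simp [word_cons, grading_X, grading_ι, ih, ← monomial_zero_left, monomial_mul_monomial,
      add_comm]

theorem grading_mono (b : B) (l : List B) :
    hfree.grading (mono ι X b l) = monomial l.length (mono ι X b l) := by
  rw [mono_eq_mul_word, map_mul, grading_ι, grading_word, ← monomial_zero_left,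
    monomial_mul_monomial, zero_add]

def homogeneousComponent (n : ℕ) : A →ₗ[ℂ] A :=
  (lcoeff A n).restrictScalars ℂ ∘ₗ hfree.grading.toLinearMap

theorem homogeneousComponent_apply (n : ℕ) (a : A) :
    hfree.homogeneousComponent n a = (hfree.grading a).coeff n := rfl

theorem homogeneousComponent_mono (n : ℕ) (b : B) (l : List B) :
    hfree.homogeneousComponent n (mono ι X b l) = if l.length = n then mono ι X b l else 0 := by
  simp [homogeneousComponent_apply, grading_mono, coeff_monomial]

theorem eval_one_grading (a : A) : (hfree.grading a).eval 1 = a := by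
  have h : (leval (1 : A)).restrictScalars ℂ ∘ₗ hfree.grading.toLinearMap = LinearMap.id :=
    hfree.linearMap_ext fun b l => by simp [grading_mono]
  exact LinearMap.congr_fun h a

theorem mem_of_forall_homogeneousComponent_mem {S : Submodule ℂ A} {a : A}
    (h : ∀ n, hfree.homogeneousComponent n a ∈ S) : a ∈ S := by
  rw [← hfree.eval_one_grading a, eval_eq_sum, Polynomial.sum_def]
  exact S.sum_mem fun n _ => by simpa [homogeneousComponent_apply] using h n

theorem range_homogeneousComponent_zero_le :
    LinearMap.range (hfree.homogeneousComponent 0) ≤ LinearMap.range ι.toLinearMap := by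
  rw [LinearMap.range_eq_map, ← hfree.span_monomials, Submodule.map_span_le]
  rintro _ ⟨⟨b, l⟩, rfl⟩
  rw [homogeneousComponent_mono]
  cases l with
  | nil => exact ⟨b, by simp [mono_eq_mul_word]⟩
  | cons => exact zero_mem _

theorem homogeneousComponent_mul (n : ℕ) (p q : A) :
    hfree.homogeneousComponent n (p * q) =
      ∑ ij ∈ antidiagonal n,
        hfree.homogeneousComponent ij.1 p * hfree.homogeneousComponent ij.2 q := by
  simp [homogeneousComponent_apply, coeff_mul]

theorem homogeneousComponent_mem_commutatorSpan (n : ℕ) {a : A} (ha : a ∈ commutatorSpan A) :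
    hfree.homogeneousComponent n a ∈ commutatorSpan A := by
  refine (Submodule.span_le (p := (commutatorSpan A).comap _).2 ?_) ha
  rintro _ ⟨p, q, rfl⟩
  rw [SetLike.mem_coe, Submodule.mem_comap, map_sub, homogeneousComponent_mul,
    homogeneousComponent_mul, ← Nat.sum_antidiagonal_swap, ← sum_sub_distrib]
  exact Submodule.sum_mem _ fun ij _ => Submodule.subset_span ⟨_, _, rfl⟩

end Grading

end IsFreeProduct

namespace CyclicDer

variable {B A : Type} [Ring B] [Algebra ℂ B] [Ring A] [Algebra ℂ A]

theorem mul'_comm_tmul_one_mul (x : A) (u : A ⊗[ℂ] A) :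
    LinearMap.mul' ℂ A (TensorProduct.comm ℂ A A ((x ⊗ₜ 1) * u)) =
      LinearMap.mul' ℂ A (TensorProduct.comm ℂ A A (u * (1 ⊗ₜ x))) := by
  induction u using TensorProduct.induction_on with
  | zero => simp
  | tmul a c => simp [Algebra.TensorProduct.tmul_mul_tmul, mul_assoc]
  | add u v hu hv => simp only [mul_add, add_mul, map_add, hu, hv]

theorem cyclicDer_mul_comm {D : A →ₗ[ℂ] A ⊗[ℂ] A}
    (hD : ∀ p q : A, D (p * q) = (p ⊗ₜ[ℂ] (1 : A)) * D q + D p * ((1 : A) ⊗ₜ[ℂ] q))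
    (p q : A) : cyclicDer D (p * q) = cyclicDer D (q * p) := by
  simp only [cyclicDer, LinearMap.comp_apply, LinearEquiv.coe_coe, hD, map_add,
    mul'_comm_tmul_one_mul]
  exact add_comm _ _

theorem divg_tmul_one_mul (X p : A) (u : A ⊗[ℂ] A) :
    divg X ((p ⊗ₜ 1) * u) = p * divg X u := by
  induction u using TensorProduct.induction_on with
  | zero => simp
  | tmul a c => simp [divg, Algebra.TensorProduct.tmul_mul_tmul, mul_assoc]
  | add u v hu hv => simp only [mul_add, map_add, hu, hv]

theorem divg_mul_one_tmul (X q : A) (u : A ⊗[ℂ] A) :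
    divg X (u * (1 ⊗ₜ q)) = divg X u * q := by
  induction u using TensorProduct.induction_on with
  | zero => simp
  | tmul a c => simp [divg, Algebra.TensorProduct.tmul_mul_tmul, mul_assoc]
  | add u v hu hv => simp only [add_mul, map_add, hu, hv]

theorem numOp_mul {X : A} {D : A →ₗ[ℂ] A ⊗[ℂ] A}
    (hD : ∀ p q : A, D (p * q) = (p ⊗ₜ[ℂ] (1 : A)) * D q + D p * ((1 : A) ⊗ₜ[ℂ] q))
    (p q : A) : numOp X D (p * q) = p * numOp X D q + numOp X D p * q := by
  simp only [numOp, LinearMap.comp_apply, hD, map_add, divg_tmul_one_mul, divg_mul_one_tmul]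

/-- On `a ⊗ c` the two sides are `a X c` and `X c a`. -/
theorem numOp_sub_X_mul_cyclicDer_mem (X : A) (D : A →ₗ[ℂ] A ⊗[ℂ] A) (a : A) :
    numOp X D a - X * cyclicDer D a ∈ commutatorSpan A := by
  suffices ∀ u : A ⊗[ℂ] A,
      divg X u - X * LinearMap.mul' ℂ A (TensorProduct.comm ℂ A A u) ∈ commutatorSpan A from
    this (D a)
  intro u
  induction u using TensorProduct.induction_on with
  | zero => simp
  | tmul a c =>
    exact Submodule.subset_span ⟨a, X * c, by simp [divg, mul_assoc]⟩
  | add u v hu hv =>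
    simpa only [map_add, mul_add, add_sub_add_comm] using add_mem hu hv

structure IsDiffQuotient (ι : B →ₐ[ℂ] A) (X : A) (D : A →ₗ[ℂ] A ⊗[ℂ] A) :
    Prop where
  map_mul : ∀ p q : A, D (p * q) = (p ⊗ₜ[ℂ] (1 : A)) * D q + D p * ((1 : A) ⊗ₜ[ℂ] q)
  map_X : D X = (1 : A) ⊗ₜ[ℂ] (1 : A)
  map_ι : ∀ b : B, D (ι b) = 0

namespace IsDiffQuotient

variable {ι : B →ₐ[ℂ] A} {X : A} {D : A →ₗ[ℂ] A ⊗[ℂ] A}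

theorem map_word (hD : IsDiffQuotient ι X D) (l : List B) :
    D (word ι X l) =
      ∑ i ∈ Finset.range l.length, word ι X (l.take i) ⊗ₜ monoOfList ι X (l.drop i) := by
  induction l with
  | nil =>
    have h := hD.map_mul 1 1
    simp only [mul_one, ← Algebra.TensorProduct.one_def, one_mul, left_eq_add] at h
    simpa using h
  | cons c l ih =>
    have hXc : D (X * ι c) = 1 ⊗ₜ ι c := by simp [hD.map_mul, hD.map_X, hD.map_ι]
    rw [word_cons, hD.map_mul, hXc, ih, Finset.mul_sum, List.length_cons, Finset.sum_range_succ']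
    congr 1
    · refine Finset.sum_congr rfl fun i _ => ?_
      simp [Algebra.TensorProduct.tmul_mul_tmul, word_cons]
    · simp [Algebra.TensorProduct.tmul_mul_tmul, monoOfList, mono_eq_mul_word]

theorem cyclicDer_word (hD : IsDiffQuotient ι X D) (l : List B) :
    cyclicDer D (word ι X l) = ∑ i ∈ Finset.range l.length, monoOfList ι X (l.rotate i) := by
  simp only [cyclicDer, LinearMap.comp_apply, hD.map_word, map_sum]
  refine Finset.sum_congr rfl fun i hi => ?_
  have hdrop : l.drop i ≠ [] := by simpa using Finset.mem_range.1 hi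
  simp [List.rotate_eq_drop_append_take (Finset.mem_range.1 hi).le,
    monoOfList_append ι X hdrop]

theorem cyclicDer_ι (hD : IsDiffQuotient ι X D) (b : B) : cyclicDer D (ι b) = 0 := by
  simp [cyclicDer, hD.map_ι]

theorem numOp_mono (hD : IsDiffQuotient ι X D) (b : B) (l : List B) :
    numOp X D (mono ι X b l) = l.length • mono ι X b l := by
  have hι : ∀ c, numOp X D (ι c) = 0 := fun c => by simp [numOp, hD.map_ι]
  have hX : numOp X D X = X := by simp [numOp, divg, hD.map_X]
  induction l generalizing b with
  | nil => simpa [mono_eq_mul_word] using hι b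
  | cons c l ih =>
    rw [mono_cons ι X, numOp_mul hD.map_mul, numOp_mul hD.map_mul, ih, hι, hX, zero_mul,
      add_zero, List.length_cons, succ_nsmul, mul_smul_comm, mul_add, mul_smul_comm]

end IsDiffQuotient

structure IsCyclicRotation (ι : B →ₐ[ℂ] A) (X : A) (ρ : A →ₗ[ℂ] A) : Prop where
  map_mono_nil : ∀ b0 : B, ρ (mono ι X b0 []) = mono ι X b0 []
  map_mono_cons : ∀ (b0 b1 : B) (bs : List B),
    ρ (mono ι X b0 (b1 :: bs)) = mono ι X b1 bs * X * ι b0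

namespace IsCyclicRotation

variable {ι : B →ₐ[ℂ] A} {X : A} {ρ : A →ₗ[ℂ] A}

theorem map_monoOfList (hρ : IsCyclicRotation ι X ρ) (l : List B) :
    ρ (monoOfList ι X l) = monoOfList ι X (l.rotate 1) := by
  rcases l with _ | ⟨b, _ | ⟨c, l⟩⟩
  · simpa [monoOfList, mono_eq_mul_word] using hρ.map_mono_nil 1
  · simpa [monoOfList] using hρ.map_mono_nil b
  · simp only [List.rotate_cons_succ, List.rotate_zero, List.cons_append, monoOfList]
    rw [hρ.map_mono_cons, mono_eq_mul_word, mono_eq_mul_word, word_append]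
    simp [word, mul_assoc]

theorem pow_map_monoOfList (hρ : IsCyclicRotation ι X ρ) (n : ℕ) (l : List B) :
    (ρ ^ n) (monoOfList ι X l) = monoOfList ι X (l.rotate n) := by
  induction n with
  | zero => simp
  | succ n ih => rw [pow_succ', Module.End.mul_apply, ih, hρ.map_monoOfList, List.rotate_rotate]

variable {D : A →ₗ[ℂ] A ⊗[ℂ] A}

/-- `ρ` turns the rotation sum `δ (word l)` into `δ (word (l.rotate 1))`, and `δ` is invariant
under cyclic permutation of products. -/
theorem map_cyclicDer_word (hρ : IsCyclicRotation ι X ρ) (hD : IsDiffQuotient ι X D)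
    (l : List B) : ρ (cyclicDer D (word ι X l)) = cyclicDer D (word ι X l) := by
  have hrot : cyclicDer D (word ι X (l.rotate 1)) = cyclicDer D (word ι X l) := by
    rcases l with _ | ⟨c, l⟩
    · rfl
    · rw [List.rotate_cons_succ, List.rotate_zero, word_append, word_cons,
        cyclicDer_mul_comm hD.map_mul]
      simp [word]
  conv_rhs => rw [← hrot]
  rw [hD.cyclicDer_word, hD.cyclicDer_word, map_sum, List.length_rotate]
  refine Finset.sum_congr rfl fun i _ => ?_
  rw [hρ.map_monoOfList, List.rotate_rotate, List.rotate_rotate, add_comm]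

theorem comp_cyclicDer (hρ : IsCyclicRotation ι X ρ) (hfree : IsFreeProduct ι X)
    (hD : IsDiffQuotient ι X D) : ρ ∘ₗ cyclicDer D = cyclicDer D := by
  refine hfree.linearMap_ext fun b l => ?_
  rcases l.eq_nil_or_concat with rfl | ⟨l, c, rfl⟩
  · simp [mono_eq_mul_word, hD.cyclicDer_ι]
  · rw [LinearMap.comp_apply, mono_eq_mul_word, cyclicDer_mul_comm hD.map_mul,
      List.concat_eq_append, word_concat_mul, hρ.map_cyclicDer_word hD]

end IsCyclicRotation

end CyclicDer

namespace IsFreeProduct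

open CyclicDer

variable {B A : Type} [Ring B] [Algebra ℂ B] [Ring A] [Algebra ℂ A]
  {ι : B →ₐ[ℂ] A} {X : A}
  (hfree : IsFreeProduct ι X)

theorem homogeneousComponent_monoOfList (n : ℕ) {l : List B} (hl : l ≠ []) :
    hfree.homogeneousComponent n (monoOfList ι X l) =
      if l.length = n + 1 then monoOfList ι X l else 0 := by
  obtain ⟨b, l, rfl⟩ := List.exists_cons_of_ne_nil hl
  simp [monoOfList, homogeneousComponent_mono]

theorem homogeneousComponent_comp_numOp {D : A →ₗ[ℂ] A ⊗[ℂ] A}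
    (hD : IsDiffQuotient ι X D) (n : ℕ) :
    hfree.homogeneousComponent n ∘ₗ numOp X D = (n : ℂ) • hfree.homogeneousComponent n := by
  refine hfree.linearMap_ext fun b l => ?_
  rw [LinearMap.comp_apply, hD.numOp_mono, map_nsmul, LinearMap.smul_apply,
    homogeneousComponent_mono]
  split_ifs with h
  · rw [h, Nat.cast_smul_eq_nsmul]
  · simp

theorem homogeneousComponent_comp_rotation {ρ : A →ₗ[ℂ] A} (hρ : IsCyclicRotation ι X ρ)
    (n : ℕ) :
    hfree.homogeneousComponent n ∘ₗ ρ = ρ ∘ₗ hfree.homogeneousComponent n := by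
  refine hfree.linearMap_ext fun b l => ?_
  have hmono : mono ι X b l = monoOfList ι X (b :: l) := rfl
  rw [LinearMap.comp_apply, LinearMap.comp_apply, hmono, hρ.map_monoOfList,
    homogeneousComponent_monoOfList _ _ (by simp), homogeneousComponent_monoOfList _ _ (by simp),
    List.length_rotate]
  split_ifs <;> simp [hρ.map_monoOfList]

theorem cyclicDer_X_mul_comp_homogeneousComponent {D : A →ₗ[ℂ] A ⊗[ℂ] A}
    (hD : IsDiffQuotient ι X D) {ρ : A →ₗ[ℂ] A} (hρ : IsCyclicRotation ι X ρ) (n : ℕ) :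
    cyclicDer D ∘ₗ LinearMap.mulLeft ℂ X ∘ₗ hfree.homogeneousComponent n =
      (∑ i ∈ Finset.range (n + 1), ρ ^ i) ∘ₗ hfree.homogeneousComponent n := by
  refine hfree.linearMap_ext fun b l => ?_
  simp only [LinearMap.comp_apply, homogeneousComponent_mono]
  split_ifs with h
  · have hword : X * mono ι X b l = word ι X (b :: l) := by
      rw [mono_eq_mul_word, word_cons, mul_assoc]
    rw [LinearMap.mulLeft_apply, hword, hD.cyclicDer_word, LinearMap.sum_apply, ← h]
    exact Finset.sum_congr rfl fun i _ => (hρ.pow_map_monoOfList i (b :: l)).symm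
  · simp

end IsFreeProduct

namespace CyclicDer

variable {B A : Type} [Ring B] [Algebra ℂ B] [Ring A] [Algebra ℂ A]
  {ι : B →ₐ[ℂ] A} {X : A}
  {D : A →ₗ[ℂ] A ⊗[ℂ] A}

theorem ker_cyclicDer (hfree : IsFreeProduct ι X) (hD : IsDiffQuotient ι X D) :
    LinearMap.ker (cyclicDer D) = LinearMap.range ι.toLinearMap ⊔ commutatorSpan A := by
  refine le_antisymm (fun a ha => hfree.mem_of_forall_homogeneousComponent_mem fun n => ?_)
    (sup_le ?_ ?_)
  · rcases Nat.eq_zero_or_pos n with rfl | hn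
    · exact Submodule.mem_sup_left (hfree.range_homogeneousComponent_zero_le ⟨a, rfl⟩)
    · have hN : numOp X D a ∈ commutatorSpan A := by
        simpa [LinearMap.mem_ker.1 ha] using numOp_sub_X_mul_cyclicDer_mem X D a
      have hNn := hfree.homogeneousComponent_mem_commutatorSpan n hN
      rw [← LinearMap.comp_apply, hfree.homogeneousComponent_comp_numOp hD,
        LinearMap.smul_apply, Submodule.smul_mem_iff _ (Nat.cast_ne_zero.2 hn.ne')] at hNn
      exact Submodule.mem_sup_right hNn
  · rintro _ ⟨b, rfl⟩
    exact hD.cyclicDer_ι b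
  · refine Submodule.span_le.2 ?_
    rintro _ ⟨p, q, rfl⟩
    simp [cyclicDer_mul_comm hD.map_mul p q]

theorem range_cyclicDer {ρ : A →ₗ[ℂ] A} (hfree : IsFreeProduct ι X)
    (hD : IsDiffQuotient ι X D) (hρ : IsCyclicRotation ι X ρ) :
    LinearMap.range (cyclicDer D) = LinearMap.ker (LinearMap.id - ρ) := by
  refine le_antisymm ?_ fun v hv => hfree.mem_of_forall_homogeneousComponent_mem fun n => ?_
  · rintro _ ⟨a, rfl⟩
    rw [LinearMap.mem_ker, LinearMap.sub_apply, LinearMap.id_apply, sub_eq_zero]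
    exact (LinearMap.congr_fun (hρ.comp_cyclicDer hfree hD) a).symm
  · rw [LinearMap.mem_ker, LinearMap.sub_apply, LinearMap.id_apply, sub_eq_zero] at hv
    have hfix : ρ (hfree.homogeneousComponent n v) = hfree.homogeneousComponent n v := by
      rw [← LinearMap.comp_apply, ← hfree.homogeneousComponent_comp_rotation hρ,
        LinearMap.comp_apply, ← hv]
    have hδ := LinearMap.congr_fun (hfree.cyclicDer_X_mul_comp_homogeneousComponent hD hρ n) v
    simp only [LinearMap.comp_apply, LinearMap.mulLeft_apply, LinearMap.sum_apply,
        Module.End.pow_apply, Function.iterate_fixed hfix, Finset.sum_const,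
      Finset.card_range] at hδ
    refine ⟨((n + 1 : ℕ) : ℂ)⁻¹ • (X * hfree.homogeneousComponent n v), ?_⟩
    rw [map_smul, hδ, ← Nat.cast_smul_eq_nsmul ℂ,
      inv_smul_smul₀ (Nat.cast_ne_zero.2 n.succ_ne_zero)]

end CyclicDer

/-- Exactness of `0 → B + [B⟨X⟩,B⟨X⟩] → B⟨X⟩ →^{δ} B⟨X⟩ →^{Θ} B⟨X⟩`:
`ker δ_{X:B} = B + [B⟨X⟩,B⟨X⟩]` and `ran δ_{X:B} = ker Θ`, where `Θ = id − ρ` with `ρ`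
the cyclic rotation on monomials. -/
theorem cyclicDer_exact_sequence
    {B A : Type} [Ring B] [Algebra ℂ B] [Ring A] [Algebra ℂ A]
    (ι : B →ₐ[ℂ] A) (X : A) (hfree : IsFreeProduct ι X)
    (D : A →ₗ[ℂ] A ⊗[ℂ] A)
    (hD : ∀ p q : A, D (p * q) = (p ⊗ₜ[ℂ] (1 : A)) * D q + D p * ((1 : A) ⊗ₜ[ℂ] q))
    (hDX : D X = (1 : A) ⊗ₜ[ℂ] (1 : A))
    (hDB : ∀ b : B, D (ι b) = 0)
    (ρ : A →ₗ[ℂ] A)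
    (hρ0 : ∀ b0 : B, ρ (mono ι X b0 []) = mono ι X b0 [])
    (hρ : ∀ (b0 b1 : B) (bs : List B),
      ρ (mono ι X b0 (b1 :: bs)) = mono ι X b1 bs * X * ι b0) :
    LinearMap.ker (cyclicDer D) =
        LinearMap.range ι.toLinearMap ⊔
          Submodule.span ℂ {x : A | ∃ p q : A, x = p * q - q * p} ∧
      LinearMap.range (cyclicDer D) = LinearMap.ker (LinearMap.id - ρ) :=
  ⟨CyclicDer.ker_cyclicDer hfree ⟨hD, hDX, hDB⟩,
    CyclicDer.range_cyclicDer hfree ⟨hD, hDX, hDB⟩ ⟨hρ0, hρ⟩⟩
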